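/- arXiv:math/9604205 — 7 statements merged into one kernel-verified Lean document; each statement's English description precedes it below -/
import Mathlib

section
/- Let S be a compact subset of a metric space on which a group G acts by bijections of S, with the property: for every q ∈ S there exist a sequence (g_j) in G and r ∈ S such that g_j(a) → q for every a ∈ S with a ≠ r. If A ⊆ S is nonempty, closed, G-invariant, and A is not a singleton, then A = S. -/
open Filter Topology

/-- In a compact metric space with the attracting dynamics property, every
nonempty closed invariant subset with at least two points is everything. -/
theorem invariant_closed_eq_univ_of_attracting_dynamics
    (S : Type*) [MetricSpace S] [CompactSpace S]
    (G : Type*) [Group G] [MulAction G S]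
    (hdyn : ∀ q : S, ∃ g : ℕ → G, ∃ r : S,
      ∀ a : S, a ≠ r → Tendsto (fun j => g j • a) atTop (𝓝 q))
    (A : Set S) (hAne : A.Nonempty) (hAcl : IsClosed A)
    (hAinv : ∀ γ : G, ∀ a ∈ A, γ • a ∈ A)
    (hA2 : ∃ a ∈ A, ∃ b ∈ A, a ≠ b) :
    A = Set.univ := by
  ext q
  simp only [Set.mem_univ, iff_true]
  obtain ⟨g, r, hg⟩ := hdyn q
  obtain ⟨a, ha, b, hb, hab⟩ := hA2
  obtain ⟨c, hc, hcr⟩ : ∃ c ∈ A, c ≠ r := by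
    by_cases h : a = r
    · exact ⟨b, hb, by rw [← h]; exact hab.symm⟩
    · exact ⟨a, ha, h⟩
  exact hAcl.mem_of_tendsto (hg c hcr)
    (Filter.Eventually.of_forall fun j => hAinv (g j) c hc)
end

section
/- Let S be a metric space with at least three points such that for every q ∈ S there exist injective self-maps f_j of S and r ∈ S such that f_j(x) → q for all x ≠ r. Then S has no isolated points. -/
open Filter Topology

/-- A metric space with at least three points and the attracting dynamics
property (by injective self-maps) has no isolated points. -/
theorem no_isolated_points_of_attracting_dynamics
    (S : Type*) [MetricSpace S]
    (h3 : ∃ a b c : S, a ≠ b ∧ a ≠ c ∧ b ≠ c)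
    (hdyn : ∀ q : S, ∃ f : ℕ → S → S, (∀ j, Function.Injective (f j)) ∧
      ∃ r : S, ∀ x : S, x ≠ r → Tendsto (fun j => f j x) atTop (𝓝 q)) :
    ∀ q : S, ¬ IsOpen ({q} : Set S) := by
  intro q hq
  obtain ⟨f, hinj, r, hf⟩ := hdyn q
  obtain ⟨a, b, c, hab, hac, hbc⟩ := h3
  -- find x ≠ y with x ≠ r, y ≠ r
  obtain ⟨x, y, hxy, hxr, hyr⟩ : ∃ x y : S, x ≠ y ∧ x ≠ r ∧ y ≠ r := by
    by_cases ha : a = r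
    · exact ⟨b, c, hbc, ha ▸ hab.symm, ha ▸ hac.symm⟩
    · by_cases hb : b = r
      · exact ⟨a, c, hac, ha, hb ▸ hbc.symm⟩
      · exact ⟨a, b, hab, ha, hb⟩
  have hx : ∀ᶠ j in atTop, f j x ∈ ({q} : Set S) :=
    (hf x hxr).eventually_mem (hq.mem_nhds rfl)
  have hy : ∀ᶠ j in atTop, f j y ∈ ({q} : Set S) :=
    (hf y hyr).eventually_mem (hq.mem_nhds rfl)
  obtain ⟨j, hjx, hjy⟩ := (hx.and hy).exists
  exact hxy (hinj j (hjx.trans hjy.symm))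
end

section
/- Let S be a compact metric space, G a group acting on S by homeomorphisms with the attracting dynamics property (for each q ∈ S there exist g_j ∈ G, r ∈ S with g_j(x) → q for all x ≠ r). If S has at least three points, then S is a perfect set and hence has the cardinality of the continuum. -/
open Filter Topology

/-- A compact metric space with at least three points, carrying a group action
by homeomorphisms with the attracting dynamics property, is perfect and hence
has the cardinality of the continuum. -/
theorem perfect_and_card_continuum_of_attracting_dynamics
    (S : Type*) [MetricSpace S] [CompactSpace S]
    (h3 : ∃ a b c : S, a ≠ b ∧ a ≠ c ∧ b ≠ c)
    (G : Type*) [Group G] [MulAction G S]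
    (hcont : ∀ γ : G, Continuous fun x : S => γ • x)
    (hdyn : ∀ q : S, ∃ g : ℕ → G, ∃ r : S,
      ∀ x : S, x ≠ r → Tendsto (fun j => g j • x) atTop (𝓝 q)) :
    (∀ q : S, ¬ IsOpen ({q} : Set S)) ∧ Cardinal.mk S = Cardinal.continuum := by
  -- key accumulation property
  have key : ∀ q : S, ∀ U ∈ 𝓝 q, ∃ z ∈ U, z ≠ q := by
    intro q U hU
    obtain ⟨g, r, hg⟩ := hdyn q
    obtain ⟨a, b, c, hab, hac, hbc⟩ := h3
    -- pick two distinct points different from r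
    obtain ⟨x, y, hxy, hxr, hyr⟩ : ∃ x y : S, x ≠ y ∧ x ≠ r ∧ y ≠ r := by
      by_cases har : a = r
      · exact ⟨b, c, hbc, har ▸ hab.symm, har ▸ hac.symm⟩
      · by_cases hbr : b = r
        · exact ⟨a, c, hac, har, hbr ▸ hbc.symm⟩
        · exact ⟨a, b, hab, har, hbr⟩
    have hx := hg x hxr
    have hy := hg y hyr
    have hxU := hx.eventually_mem hU
    have hyU := hy.eventually_mem hU
    obtain ⟨j, hjx, hjy⟩ := (hxU.and hyU).exists
    by_cases hxq : g j • x = q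
    · refine ⟨g j • y, hjy, ?_⟩
      intro h
      exact hxy (smul_left_cancel (g j) (hxq.trans h.symm))
    · exact ⟨g j • x, hjx, hxq⟩
  have hiso : ∀ q : S, ¬ IsOpen ({q} : Set S) := by
    intro q hopen
    obtain ⟨z, hz, hne⟩ := key q {q} (hopen.mem_nhds rfl)
    exact hne hz
  refine ⟨hiso, le_antisymm ?_ ?_⟩
  · -- upper bound via dense sequence
    have hne : Nonempty S := ⟨h3.choose⟩
    obtain ⟨u, hu⟩ : ∃ u : ℕ → S, DenseRange u :=
      ⟨TopologicalSpace.denseSeq S, TopologicalSpace.denseRange_denseSeq S⟩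
    have hclose : ∀ (x : S) (n : ℕ), ∃ k, dist x (u k) < 1 / (n + 1) := by
      intro x n
      have := Metric.denseRange_iff.1 hu x (1 / (n + 1)) (by positivity)
      simpa [dist_comm] using this
    choose f hf using hclose
    have hinj : Function.Injective f := by
      intro x y hxy
      have hd : dist x y ≤ 0 := by
        refine le_of_forall_pos_le_add fun ε hε => ?_
        obtain ⟨n, hn⟩ := exists_nat_one_div_lt (half_pos hε)
        have h1 := hf x n
        have h2 := hf y n
        rw [hxy] at h1
        calc dist x y ≤ dist x (u (f y n)) + dist y (u (f y n)) :=
              dist_triangle_right _ _ _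
          _ ≤ 1 / (n + 1) + 1 / (n + 1) := add_le_add h1.le h2.le
          _ ≤ ε / 2 + ε / 2 := add_le_add hn.le hn.le
          _ = 0 + ε := by ring
      exact eq_of_dist_eq_zero (le_antisymm hd dist_nonneg)
    have hle := Cardinal.lift_mk_le_lift_mk_of_injective hinj
    have hmk : Cardinal.mk (ℕ → ℕ) = Cardinal.continuum := by
      rw [Cardinal.mk_arrow]
      simp [Cardinal.aleph0_power_aleph0]
    rw [hmk, Cardinal.lift_continuum] at hle
    rwa [Cardinal.lift_uzero] at hle
  · -- lower bound via perfect set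
    have hperf : Perfect (Set.univ : Set S) := by
      refine ⟨isClosed_univ, preperfect_iff_nhds.2 fun x _ U hU => ?_⟩
      obtain ⟨z, hz, hne⟩ := key x U hU
      exact ⟨z, ⟨hz, trivial⟩, hne⟩
    obtain ⟨F, -, -, hF⟩ := hperf.exists_nat_bool_injection ⟨h3.choose, trivial⟩
    have hle := Cardinal.lift_mk_le_lift_mk_of_injective hF
    have hmk : Cardinal.mk (ℕ → Bool) = Cardinal.continuum := by
      rw [Cardinal.mk_arrow]
      simp [Cardinal.two_power_aleph0]
    rw [hmk, Cardinal.lift_continuum] at hle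
    rwa [Cardinal.lift_uzero] at hle
end

section
/- Dichotomy for invariant superlevel sets: let S be a compact metric space with the attracting dynamics property as above, f : S → ℕ upper semicontinuous and invariant under the acting group, m₁ = max f on S, and m₂ < m₁ such that { f ≥ m₂ } strictly contains { f ≥ m₁ }. Then either S ⊆ { f ≥ m₁ }, or { f ≥ m₁ } is a single point and S ⊆ { f ≥ m₂ }. -/
open Filter Topology

/-! A closed invariant set `s` containing two distinct points contains every `q`: pick a point
`c ∈ s` other than the exceptional point `r` of the sequence attracting to `q`; the orbit points
`g j • c` stay in `s` and converge to `q`. Superlevel sets of an invariant upper semicontinuous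
function are closed and invariant, so `{f ≥ m₁}` is either everything or a single point `a`,
and in the latter case `{f ≥ m₂}` contains `a` and a second point, hence is everything. -/

section Attracting

variable {X G : Type*} [TopologicalSpace X] [SMul G X]

theorem IsClosed.eq_univ_of_attracting
    (hdyn : ∀ q : X, ∃ g : ℕ → G, ∃ r : X,
      ∀ x : X, x ≠ r → Tendsto (fun j => g j • x) atTop (𝓝 q))
    {s : Set X} (hs : IsClosed s) (hsmul : ∀ γ : G, ∀ x ∈ s, γ • x ∈ s) (hnt : s.Nontrivial) :
    s = Set.univ := by
  refine Set.eq_univ_of_forall fun q => ?_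
  obtain ⟨g, r, hg⟩ := hdyn q
  obtain ⟨c, hc, hcr⟩ := hnt.exists_ne r
  exact hs.mem_of_tendsto (hg c hcr) (Eventually.of_forall fun j => hsmul (g j) c hc)

theorem UpperSemicontinuous.forall_le_of_attracting {β : Type*} [LinearOrder β]
    (hdyn : ∀ q : X, ∃ g : ℕ → G, ∃ r : X,
      ∀ x : X, x ≠ r → Tendsto (fun j => g j • x) atTop (𝓝 q))
    {f : X → β} (husc : UpperSemicontinuous f) (hinv : ∀ γ : G, ∀ x : X, f (γ • x) = f x)
    {m : β} (hnt : {x : X | m ≤ f x}.Nontrivial) (x : X) : m ≤ f x :=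
  Set.eq_univ_iff_forall.mp ((husc.isClosed_preimage m).eq_univ_of_attracting hdyn
    (fun γ y hy => le_trans hy (hinv γ y).ge) hnt) x

end Attracting

theorem superlevel_dichotomy_of_attracting_dynamics_general
    (S : Type*) [MetricSpace S]
    (G : Type*) [Group G] [MulAction G S]
    (hdyn : ∀ q : S, ∃ g : ℕ → G, ∃ r : S,
      ∀ x : S, x ≠ r → Tendsto (fun j => g j • x) atTop (𝓝 q))
    (f : S → ℕ) (husc : UpperSemicontinuous f)
    (hinv : ∀ γ : G, ∀ x : S, f (γ • x) = f x)
    (m₁ m₂ : ℕ) (hm₁ : ∃ x : S, f x = m₁)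
    (hm₂ : m₂ < m₁)
    (hssub : {x : S | m₁ ≤ f x} ⊂ {x : S | m₂ ≤ f x}) :
    (∀ x : S, m₁ ≤ f x) ∨
      ((∃ pt : S, {x : S | m₁ ≤ f x} = {pt}) ∧ ∀ x : S, m₂ ≤ f x) := by
  obtain ⟨a, ha⟩ := hm₁
  rcases {x : S | m₁ ≤ f x}.subsingleton_or_nontrivial with htop | htop
  · obtain ⟨b, hb₂, hb₁⟩ := Set.exists_of_ssubset hssub
    have hba : b ≠ a := by
      rintro rfl
      exact hb₁ ha.ge
    exact Or.inr ⟨⟨a, htop.eq_singleton_of_mem ha.ge⟩,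
      husc.forall_le_of_attracting hdyn hinv ⟨b, hb₂, a, hm₂.le.trans ha.ge, hba⟩⟩
  · exact Or.inl (husc.forall_le_of_attracting hdyn hinv htop)

/-- Dichotomy for invariant superlevel sets under attracting dynamics: either
everything has value at least m₁, or the top superlevel set is a single point
and everything has value at least m₂. -/
theorem superlevel_dichotomy_of_attracting_dynamics
    (S : Type*) [MetricSpace S] [CompactSpace S] [Nonempty S]
    (G : Type*) [Group G] [MulAction G S]
    (hcont : ∀ γ : G, Continuous fun x : S => γ • x)
    (hdyn : ∀ q : S, ∃ g : ℕ → G, ∃ r : S,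
      ∀ x : S, x ≠ r → Tendsto (fun j => g j • x) atTop (𝓝 q))
    (f : S → ℕ) (husc : UpperSemicontinuous f)
    (hinv : ∀ γ : G, ∀ x : S, f (γ • x) = f x)
    (m₁ m₂ : ℕ) (hmax : ∀ x : S, f x ≤ m₁) (hm₁ : ∃ x : S, f x = m₁)
    (hm₂ : m₂ < m₁)
    (hssub : {x : S | m₁ ≤ f x} ⊂ {x : S | m₂ ≤ f x}) :
    (∀ x : S, m₁ ≤ f x) ∨
      ((∃ pt : S, {x : S | m₁ ≤ f x} = {pt}) ∧ ∀ x : S, m₂ ≤ f x) :=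
  superlevel_dichotomy_of_attracting_dynamics_general S G hdyn f husc hinv m₁ m₂ hm₁ hm₂ hssub
end

section
/- If a compact metric space S admits a fixed-point-free group action with the attracting dynamics property, then S is the smallest nonempty compact invariant subset: every nonempty compact invariant subset equals S. -/
open Filter Topology

/-- If a compact metric space carries a group action with the attracting
dynamics property and no invariant singleton, then every nonempty closed
invariant subset equals the whole space. -/
theorem minimal_of_attracting_dynamics_no_fixed_point
    (S : Type*) [MetricSpace S] [CompactSpace S]
    (G : Type*) [Group G] [MulAction G S]
    (hcont : ∀ γ : G, Continuous fun x : S => γ • x)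
    (hdyn : ∀ q : S, ∃ g : ℕ → G, ∃ r : S,
      ∀ x : S, x ≠ r → Tendsto (fun j => g j • x) atTop (𝓝 q))
    (hnofix : ¬ ∃ x : S, ∀ γ : G, γ • x = x) :
    ∀ A : Set S, A.Nonempty → IsClosed A → (∀ γ : G, ∀ a ∈ A, γ • a ∈ A) →
      A = Set.univ := by
  intro A hne hcl hinv
  -- A has two distinct points
  obtain ⟨a, ha⟩ := hne
  obtain ⟨b, hb, hab⟩ : ∃ b ∈ A, b ≠ a := by
    by_contra h
    push_neg at h
    exact hnofix ⟨a, fun γ => h _ (hinv γ a ha)⟩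
  ext q
  simp only [Set.mem_univ, iff_true]
  obtain ⟨g, r, hg⟩ := hdyn q
  obtain ⟨x, hx, hxr⟩ : ∃ x ∈ A, x ≠ r := by
    by_cases hra : a = r
    · exact ⟨b, hb, hra ▸ hab⟩
    · exact ⟨a, ha, hra⟩
  exact hcl.mem_of_tendsto (hg x hxr)
    (Filter.Eventually.of_forall fun j => hinv (g j) x hx)
end

section
/- In a compact metric space S with at least three points and the attracting dynamics property, for every point q ∈ S and every open neighborhood U of q with S \ U nonempty that meets the component of q, the neighborhood U meets a connected component of S different from that of q — assuming S is disconnected with at most countably many components leads to contradiction. -/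
open Filter Topology

lemma smul_mem_connectedComponent_aux
    {S : Type*} [TopologicalSpace S] {G : Type*} [Group G] [MulAction G S]
    (γ : G) (hc : Continuous fun x : S => γ • x) {x y : S}
    (h : x ∈ connectedComponent y) : γ • x ∈ connectedComponent (γ • y) := by
  have himg : IsConnected ((fun x : S => γ • x) '' connectedComponent y) :=
    (isConnected_connectedComponent (x := y)).image _ hc.continuousOn
  exact himg.subset_connectedComponent ⟨y, mem_connectedComponent, rfl⟩ ⟨x, h, rfl⟩

/-- In a disconnected compact metric space without isolated points carrying an
attracting group action, every neighborhood U of a point q whose component is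
not contained in U meets another connected component. -/
theorem neighborhood_meets_other_component
    (S : Type*) [MetricSpace S] [CompactSpace S] [Nonempty S]
    (G : Type*) [Group G] [MulAction G S]
    (hcont : ∀ γ : G, Continuous fun x : S => γ • x)
    (hdyn : ∀ q : S, ∃ g : ℕ → G, ∃ r : S,
      ∀ x : S, x ≠ r → Tendsto (fun j => g j • x) atTop (𝓝 q))
    (hnoiso : ∀ x : S, ¬ IsOpen ({x} : Set S))
    (hdisc : ¬ ConnectedSpace S) :
    ∀ q : S, ∀ U : Set S, IsOpen U → q ∈ U →
      (connectedComponent q \ U).Nonempty →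
      ∃ x ∈ U, x ∉ connectedComponent q := by
  intro q U hU hqU hCU
  by_contra hcon
  push_neg at hcon
  -- hcon : ∀ x ∈ U, x ∈ connectedComponent q
  obtain ⟨g, r, hg⟩ := hdyn q
  set C := connectedComponent q with hCdef
  -- there is a point outside C
  have hp : ∃ p, p ∉ C := by
    by_contra h
    push_neg at h
    have huniv : C = Set.univ := Set.eq_univ_of_forall h
    have hpre : PreconnectedSpace S :=
      ⟨huniv ▸ isPreconnected_connectedComponent⟩
    exact hdisc ⟨inferInstance⟩
  obtain ⟨p, hpC⟩ := hp
  obtain ⟨c, hcC, hcU⟩ := hCU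
  have hqc : q ≠ c := fun h => hcU (h ▸ hqU)
  -- a point of C different from r
  have ha : ∃ a ∈ C, a ≠ r := by
    by_cases hqr : q = r
    · exact ⟨c, hcC, fun h => hqc (hqr.trans h.symm)⟩
    · exact ⟨q, mem_connectedComponent, hqr⟩
  obtain ⟨a, haC, har⟩ := ha
  -- a point outside C different from r
  have hb : ∃ b, b ∉ C ∧ b ≠ r := by
    by_cases hpr : p = r
    · -- then r ∉ C ; Cᶜ is open and not {r}
      have hopen : IsOpen Cᶜ := isClosed_connectedComponent.isOpen_compl
      by_contra h
      push_neg at h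
      have hsub : Cᶜ ⊆ {r} := fun x hx => h x hx
      have heq : Cᶜ = {r} :=
        Set.Subset.antisymm hsub (by
          intro x hx
          rcases hx with rfl
          exact hpr ▸ hpC)
      exact hnoiso r (heq ▸ hopen)
    · exact ⟨p, hpC, hpr⟩
  obtain ⟨b, hbC, hbr⟩ := hb
  have hta := hg a har
  have htb := hg b hbr
  have hmem : ∀ᶠ j in atTop, g j • a ∈ U ∧ g j • b ∈ U :=
    (hta.eventually (hU.mem_nhds hqU)).and (htb.eventually (hU.mem_nhds hqU))
  obtain ⟨N, hNa, hNb⟩ := hmem.exists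
  have hNaC : g N • a ∈ C := hcon _ hNa
  have hNbC : g N • b ∈ C := hcon _ hNb
  -- so g N • b ∈ connectedComponent (g N • a)
  have h1 : g N • b ∈ connectedComponent (g N • a) := by
    have h := connectedComponent_eq hNaC
    rw [hCdef] at hNbC
    rw [← h]
    exact hNbC
  have h2 : (g N)⁻¹ • (g N • b) ∈ connectedComponent ((g N)⁻¹ • (g N • a)) :=
    smul_mem_connectedComponent_aux _ (hcont _) h1
  rw [inv_smul_smul, inv_smul_smul] at h2
  have h3 : connectedComponent a = C := (connectedComponent_eq haC).symm
  exact hbC (h3 ▸ h2)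
end

section
/- If G acts on a T1 compact space S with the attracting dynamics property and S has at least two points, then every G-invariant closed set containing at least two points is dense in S. -/
open Filter Topology

/-- Under the attracting dynamics property, every closed invariant set with at
least two elements is dense (hence equals the whole space). -/
theorem closed_invariant_dense_of_attracting_dynamics
    (S : Type*) [MetricSpace S] [CompactSpace S]
    (G : Type*) [Group G] [MulAction G S]
    (hcont : ∀ γ : G, Continuous fun x : S => γ • x)
    (hdyn : ∀ q : S, ∃ g : ℕ → G, ∃ r : S,
      ∀ x : S, x ≠ r → Tendsto (fun j => g j • x) atTop (𝓝 q))
    (A : Set S) (hAcl : IsClosed A)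
    (hAinv : ∀ γ : G, ∀ a ∈ A, γ • a ∈ A)
    (hA2 : ∃ a ∈ A, ∃ b ∈ A, a ≠ b) :
    closure A = Set.univ := by
  have hAuniv : A = Set.univ := by
    ext q
    simp only [Set.mem_univ, iff_true]
    obtain ⟨g, r, hg⟩ := hdyn q
    obtain ⟨a, ha, b, hb, hab⟩ := hA2
    obtain ⟨x, hx, hxr⟩ : ∃ x ∈ A, x ≠ r := by
      by_cases h : a = r
      · exact ⟨b, hb, fun hbr => hab (h ▸ hbr ▸ rfl)⟩
      · exact ⟨a, ha, h⟩
    exact hAcl.mem_of_tendsto (hg x hxr)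
      (Eventually.of_forall fun j => hAinv (g j) x hx)
  rw [hAuniv, closure_univ]
end
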